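/- arXiv:1511.03236 — 4 statements merged into one kernel-verified Lean document; each statement's English description precedes it below -/
import Mathlib

section
/- Let b ≥ 2 and q ≥ 1 be integers, i an integer, k a natural number, and N a natural number with N < b^k. Then S^{(b)}_{q,i}(b^k + N) = S^{(b)}_{q,i}(b^k) − S^{(b)}_{q, i − b^k}(N). -/
/-- `A_b` membership: the base-`b` expansion of `n` uses only digits 0 and 1. -/
def inAset (b n : ℕ) : Prop := ∀ d ∈ Nat.digits b n, d ≤ 1

/-- `newmanS b q i N = Σ_{n ∈ A_b, 0 ≤ n < N, n ≡ i (mod q)} (-1)^{s_b(n)}`,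
where `s_b(n)` is the sum of the base-`b` digits of `n`. -/
def newmanS (b q : ℕ) (i : ℤ) (N : ℕ) : ℤ :=
  ∑ n ∈ Finset.range N,
    if (∀ d ∈ Nat.digits b n, d ≤ 1) ∧ (n : ℤ) % q = i % q
    then (-1 : ℤ) ^ (Nat.digits b n).sum else 0

/-! For `m < b ^ k` the base-`b` digits of `b ^ k + m` are those of `m`, padded with zeros and
followed by a single `1`. Hence `b ^ k + m` lies in `A_b` exactly when `m` does, its digit sum
is one larger (flipping the sign), and `b ^ k + m ≡ i` is `m ≡ i - b ^ k`. So the terms of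
`S_{q,i}` on `[b ^ k, b ^ k + N)` are the negatives of those of `S_{q,i-b^k}` on `[0, N)`. -/

namespace Nat

variable {b k m : ℕ}

theorem digits_pow_add (hb : 1 < b) (hm : m < b ^ k) :
    digits b (b ^ k + m) = digits b m ++ List.replicate (k - (digits b m).length) 0 ++ [1] := by
  have hlen : (digits b m).length ≤ k := (digits_length_le_iff hb m).2 hm
  rw [← digits_of_lt b 1 one_ne_zero hb, digits_append_zeroes_append_digits hb one_pos,
    Nat.add_sub_cancel' hlen, mul_one, add_comm]

theorem sum_digits_pow_add (hb : 1 < b) (hm : m < b ^ k) :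
    (digits b (b ^ k + m)).sum = (digits b m).sum + 1 := by
  simp [digits_pow_add hb hm]

theorem forall_mem_digits_pow_add_iff {p : ℕ → Prop} (hp0 : p 0) (hp1 : p 1) (hb : 1 < b)
    (hm : m < b ^ k) : (∀ d ∈ digits b (b ^ k + m), p d) ↔ ∀ d ∈ digits b m, p d := by
  simp only [digits_pow_add hb hm, List.forall_mem_append, List.forall_mem_replicate,
    List.forall_mem_singleton]
  tauto

end Nat

theorem Int.add_emod_eq_iff_emod_eq_sub {a m i q : ℤ} :
    (a + m) % q = i % q ↔ m % q = (i - a) % q := by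
  change a + m ≡ i [ZMOD q] ↔ m ≡ i - a [ZMOD q]
  rw [Int.modEq_iff_dvd, Int.modEq_iff_dvd, sub_sub]

theorem newmanS_add_pow_general (b q : ℕ) (hb : 2 ≤ b) (i : ℤ) (k N : ℕ)
    (hN : N < b ^ k) :
    newmanS b q i (b ^ k + N) =
      newmanS b q i (b ^ k) - newmanS b q (i - (b : ℤ) ^ k) N := by
  rw [newmanS, Finset.sum_range_add, newmanS, newmanS, sub_eq_add_neg, ← Finset.sum_neg_distrib]
  congr 1
  refine Finset.sum_congr rfl fun m hm => ?_
  have hm : m < b ^ k := (Finset.mem_range.mp hm).trans hN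
  simp only [Nat.forall_mem_digits_pow_add_iff (p := (· ≤ 1)) zero_le_one le_rfl hb hm,
    Nat.sum_digits_pow_add hb hm, Nat.cast_add, Nat.cast_pow, Int.add_emod_eq_iff_emod_eq_sub]
  split_ifs <;> ring

theorem newmanS_add_pow (b q : ℕ) (hb : 2 ≤ b) (hq : 1 ≤ q) (i : ℤ) (k N : ℕ)
    (hN : N < b ^ k) :
    newmanS b q i (b ^ k + N) =
      newmanS b q i (b ^ k) - newmanS b q (i - (b : ℤ) ^ k) N :=
  newmanS_add_pow_general b q hb i k N hN
end

section
/- Let b ≥ 2 and q ≥ 1 be integers, i an integer, and N = b^{k₁} + b^{k₂} + ⋯ + b^{k_r} with k₁ > k₂ > ⋯ > k_r ≥ 0. Then S^{(b)}_{q,i}(N) = Σ_{j=1}^{r} (−1)^{j−1} S^{(b)}_{q, i − (b^{k₁} + ⋯ + b^{k_{j−1}})}(b^{k_j}). -/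
/-!
For `n < b ^ m` the base-`b` expansion of `b ^ m + n` is that of `n`, padded with zeros and
followed by a single digit `1`. So `n ↦ b ^ m + n` preserves membership in `A_b`, flips the sign
`(-1) ^ s_b(n)` and shifts the residue class by `b ^ m`; hence
`S_{q,i}(b ^ m + N) = S_{q,i}(b ^ m) - S_{q,i-b^m}(N)` whenever `N ≤ b ^ m`. Since
`b ^ k₂ + ⋯ + b ^ k_r < b ^ k₁`, the formula follows by induction on `r`.
-/

open Finset

theorem Nat.digits_pow_add_s12 {b m n : ℕ} (hb : 1 < b) (hn : n < b ^ m) :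
    Nat.digits b (b ^ m + n) =
      Nat.digits b n ++ List.replicate (m - (Nat.digits b n).length) 0 ++ [1] := by
  have hlen := (Nat.digits_length_le_iff hb n).2 hn
  rw [← Nat.digits_of_lt b 1 one_ne_zero hb, Nat.digits_append_zeroes_append_digits hb one_pos,
    Nat.add_sub_cancel' hlen, mul_one, add_comm]

theorem Int.add_modEq_iff_modEq_sub {n a b c : ℤ} : a + b ≡ c [ZMOD n] ↔ b ≡ c - a [ZMOD n] := by
  rw [Int.modEq_iff_dvd, Int.modEq_iff_dvd, sub_sub, add_comm]

theorem Nat.geomSum_lt_of_injective {ι : Type*} [Fintype ι] {b M : ℕ} (hb : 2 ≤ b) {k : ι → ℕ}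
    (hk : Function.Injective k) (hM : ∀ j, k j < M) : ∑ j, b ^ k j < b ^ M := by
  rw [← sum_image (fun _ _ _ _ h => hk h)]
  exact Nat.geomSum_lt hb (by simpa using hM)

theorem Fin.sum_Iio_succ {M : Type*} [AddCommMonoid M] {n : ℕ} (f : Fin (n + 1) → M) (j : Fin n) :
    ∑ i ∈ Iio j.succ, f i = f 0 + ∑ i ∈ Iio j, f i.succ := by
  rw [← Ico_bot, bot_eq_zero, Ico_eq_cons_Ioo j.succ_pos, Finset.sum_cons, ← map_succEmb_Iio,
    sum_map]
  rfl

def newmanTerm (b q : ℕ) (i : ℤ) (n : ℕ) : ℤ :=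
  if (∀ d ∈ Nat.digits b n, d ≤ 1) ∧ (n : ℤ) % q = i % q
  then (-1 : ℤ) ^ (Nat.digits b n).sum else 0

theorem newmanS_eq_sum_newmanTerm (b q : ℕ) (i : ℤ) (N : ℕ) :
    newmanS b q i N = ∑ n ∈ range N, newmanTerm b q i n := rfl

theorem newmanTerm_pow_add {b m n : ℕ} (q : ℕ) (i : ℤ) (hb : 1 < b) (hn : n < b ^ m) :
    newmanTerm b q i (b ^ m + n) = -newmanTerm b q (i - (b : ℤ) ^ m) n := by
  have hdigits : (∀ d ∈ Nat.digits b (b ^ m + n), d ≤ 1) ↔ ∀ d ∈ Nat.digits b n, d ≤ 1 := by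
    simp only [Nat.digits_pow_add_s12 hb hn, List.forall_mem_append, List.mem_replicate,
      List.forall_mem_singleton, le_refl, and_true]
    exact ⟨fun h => h.1, fun h => ⟨h, fun d hd => hd.2 ▸ zero_le_one⟩⟩
  have hsum : (Nat.digits b (b ^ m + n)).sum = (Nat.digits b n).sum + 1 := by
    simp [Nat.digits_pow_add_s12 hb hn]
  have hmod : ((b ^ m + n : ℕ) : ℤ) % q = i % q ↔ (n : ℤ) % q = (i - (b : ℤ) ^ m) % q := by
    push_cast
    exact Int.add_modEq_iff_modEq_sub
  unfold newmanTerm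
  simp only [hdigits, hmod, hsum, pow_succ, mul_neg_one]
  rw [neg_ite, neg_zero]

theorem newmanS_pow_add {b m N : ℕ} (q : ℕ) (i : ℤ) (hb : 1 < b) (hN : N ≤ b ^ m) :
    newmanS b q i (b ^ m + N) = newmanS b q i (b ^ m) - newmanS b q (i - (b : ℤ) ^ m) N := by
  simp only [newmanS_eq_sum_newmanTerm, sum_range_add, sub_eq_add_neg, ← sum_neg_distrib]
  congr 1
  exact sum_congr rfl fun n hn => newmanTerm_pow_add q i hb ((mem_range.1 hn).trans_le hN)

theorem newmanS_sum_of_powers_general (b q : ℕ) (hb : 2 ≤ b) (i : ℤ)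
    (r : ℕ) (k : Fin r → ℕ) (hk : StrictAnti k) :
    newmanS b q i (∑ j : Fin r, b ^ k j) =
      ∑ j : Fin r, (-1 : ℤ) ^ (j : ℕ) *
        newmanS b q (i - ∑ j' ∈ Finset.Iio j, (b : ℤ) ^ k j') (b ^ k j) := by
  induction r generalizing i with
  | zero => simp [newmanS]
  | succ r ih =>
    have htail : StrictAnti fun j : Fin r => k j.succ :=
      fun _ _ h => hk (Fin.succ_lt_succ_iff.2 h)
    have hlt : ∑ j : Fin r, b ^ k j.succ < b ^ k 0 :=
      Nat.geomSum_lt_of_injective hb htail.injective fun j => hk j.succ_pos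
    have hIio : Iio (0 : Fin (r + 1)) = ∅ := Iio_eq_empty.2 isMin_bot
    rw [Fin.sum_univ_succ, newmanS_pow_add q i hb hlt.le, ih _ _ htail, Fin.sum_univ_succ, hIio]
    simp only [sum_empty, sub_zero, Fin.val_zero, pow_zero, one_mul, Fin.sum_Iio_succ, Fin.val_succ,
      pow_succ, mul_neg_one, neg_mul, sum_neg_distrib, sub_add_eq_sub_sub, ← sub_eq_add_neg]

theorem newmanS_sum_of_powers (b q : ℕ) (hb : 2 ≤ b) (hq : 1 ≤ q) (i : ℤ)
    (r : ℕ) (k : Fin r → ℕ) (hk : StrictAnti k) :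
    newmanS b q i (∑ j : Fin r, b ^ k j) =
      ∑ j : Fin r, (-1 : ℤ) ^ (j : ℕ) *
        newmanS b q (i - ∑ j' ∈ Finset.Iio j, (b : ℤ) ^ k j') (b ^ k j) :=
  newmanS_sum_of_powers_general b q hb i r k hk
end

section
/- Let b ≥ 2 and q ≥ 1 be integers, i an integer, and k a natural number. Then S^{(b)}_{q,i}(b^k) = (1/q) Σ_{m=0}^{q−1} ζ_q^{−im} Π_{p=0}^{k−1} (1 − ζ_q^{m b^p}), where ζ_q = e^{2πi/q} is a primitive q-th root of unity. -/
/-! Write `ε(n) = 1_{A_b}(n) (-1)^{s_b(n)}` (`digitSign`). Since the base-`b` digits of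
`d + b r` (`d < b`) are `d` followed by those of `r`, `ε(d + b r) = ε(d) ε(r)`, whence
`∑_{n < b^k} ε(n) xⁿ = (1 - x) ∑_{r < b^(k-1)} ε(r) (x^b)^r = ∏_{p < k} (1 - x^(b^p))`.
The congruence condition `n ≡ i (mod q)` is detected by `q⁻¹ ∑_{m < q} ζ^((n - i) m)`, and
exchanging the two sums evaluates the generating function at `x = ζ^m`. -/

open Finset

theorem Finset.sum_range_mul_eq_sum_sum {M : Type*} [AddCommMonoid M] (f : ℕ → M) (m n : ℕ) :
    ∑ x ∈ range (m * n), f x = ∑ r ∈ range m, ∑ d ∈ range n, f (d + n * r) := by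
  induction m with
  | zero => simp
  | succ m ih =>
    rw [add_mul, one_mul, sum_range_add, ih, sum_range_succ]
    simp only [add_comm, mul_comm]

section IsPrimitiveRoot

variable {K : Type*} [Field K] {ζ : K} {q : ℕ}

theorem IsPrimitiveRoot.sum_range_zpow_mul_eq_ite (hζ : IsPrimitiveRoot ζ q) (j : ℤ) :
    ∑ m ∈ range q, ζ ^ (j * m) = if (q : ℤ) ∣ j then (q : K) else 0 := by
  simp_rw [zpow_mul, zpow_natCast]
  split_ifs with hqj
  · simp [(hζ.zpow_eq_one_iff_dvd j).mpr hqj]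
  · have hne : ζ ^ j ≠ 1 := mt (hζ.zpow_eq_one_iff_dvd j).mp hqj
    have hpow : (ζ ^ j) ^ q = 1 := by
      rw [← zpow_natCast, ← zpow_mul, mul_comm, zpow_mul, zpow_natCast, hζ.pow_eq_one,
        one_zpow]
    rw [geom_sum_eq hne, hpow, sub_self, zero_div]

theorem IsPrimitiveRoot.sum_ite_modEq [NeZero q] (hζ : IsPrimitiveRoot ζ q) (s : Finset ℕ)
    (f : ℕ → K) (i : ℤ) :
    ∑ n ∈ s, (if (n : ℤ) ≡ i [ZMOD q] then f n else 0) =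
      (q : K)⁻¹ * ∑ m ∈ range q, ζ ^ (-(i * m)) * ∑ n ∈ s, f n * (ζ ^ m) ^ n := by
  have hq : (q : K) ≠ 0 := (hζ.neZero').out
  have hζ0 : ζ ≠ 0 := hζ.ne_zero (NeZero.ne q)
  have hterm (m n : ℕ) : ζ ^ (-(i * m)) * (f n * (ζ ^ m) ^ n) = f n * ζ ^ ((n - i) * m) := by
    rw [← pow_mul, ← zpow_natCast, mul_left_comm, ← zpow_add₀ hζ0]
    push_cast
    ring_nf
  simp_rw [mul_sum, hterm, sum_comm (s := range q), ← mul_sum,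
    hζ.sum_range_zpow_mul_eq_ite, Int.modEq_comm, Int.modEq_iff_dvd]
  rw [mul_sum]
  refine sum_congr rfl fun n _ => ?_
  split_ifs
  · field_simp
  · simp

end IsPrimitiveRoot

instance (b : ℕ) : DecidablePred (inAset b) :=
  fun n => inferInstanceAs (Decidable (∀ d ∈ Nat.digits b n, d ≤ 1))

def digitSign (b n : ℕ) : ℤ :=
  if inAset b n then (-1) ^ (Nat.digits b n).sum else 0

section digitSign

variable {b : ℕ}

theorem digitSign_of_lt {d : ℕ} (hd : d < b) :
    digitSign b d = if d ≤ 1 then (-1) ^ d else 0 := by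
  rcases eq_or_ne d 0 with rfl | hd0
  · simp [digitSign, inAset]
  · simp [digitSign, inAset, Nat.digits_of_lt b d hd0 hd]

theorem digitSign_add_mul (hb : 1 < b) {d : ℕ} (hd : d < b) (r : ℕ) :
    digitSign b (d + b * r) = digitSign b d * digitSign b r := by
  by_cases h : d = 0 ∧ r = 0
  · obtain ⟨rfl, rfl⟩ := h
    simp [digitSign, inAset]
  have hdigits := Nat.digits_add b hb d r hd (by tauto)
  have hA : inAset b (d + b * r) ↔ d ≤ 1 ∧ inAset b r := by simp [inAset, hdigits]
  have hsum : (Nat.digits b (d + b * r)).sum = d + (Nat.digits b r).sum := by simp [hdigits]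
  rw [digitSign_of_lt hd]
  by_cases hd1 : d ≤ 1 <;> by_cases hr : inAset b r <;>
    simp [digitSign, hA, hsum, hd1, hr, pow_add]

theorem sum_range_digitSign_mul_pow {R : Type*} [CommRing R] (hb : 1 < b) (x : R) :
    ∑ d ∈ range b, digitSign b d * x ^ d = 1 - x := by
  rw [← sum_subset (range_subset_range.mpr hb)]
  · simp [sum_range_succ, digitSign_of_lt hb, digitSign_of_lt (zero_lt_one.trans hb),
      sub_eq_add_neg]
  · intro d _ hd
    simp_all [digitSign_of_lt]

theorem prod_one_sub_pow_pow_eq_sum_digitSign {R : Type*} [CommRing R] (hb : 1 < b) (x : R)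
    (k : ℕ) :
    ∏ p ∈ range k, (1 - x ^ b ^ p) = ∑ n ∈ range (b ^ k), digitSign b n * x ^ n := by
  induction k generalizing x with
  | zero => simp [digitSign, inAset]
  | succ k ih =>
    have hx (p : ℕ) : x ^ b ^ (p + 1) = (x ^ b) ^ b ^ p := by rw [← pow_mul, pow_succ']
    rw [prod_range_succ', pow_succ, sum_range_mul_eq_sum_sum]
    simp only [hx, ih, pow_zero, pow_one]
    rw [← sum_range_digitSign_mul_pow hb x, sum_mul_sum]
    refine sum_congr rfl fun r _ => sum_congr rfl fun d hd => ?_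
    rw [digitSign_add_mul hb (mem_range.mp hd)]
    push_cast
    ring

end digitSign

theorem newmanS_eq_sum_ite_modEq_digitSign (b q : ℕ) (i : ℤ) (N : ℕ) :
    newmanS b q i N = ∑ n ∈ range N, if (n : ℤ) ≡ i [ZMOD q] then digitSign b n else 0 := by
  refine sum_congr rfl fun n _ => ?_
  by_cases hA : inAset b n
  · rw [digitSign, if_pos hA]
    exact if_congr (and_iff_right hA) rfl rfl
  · rw [digitSign, if_neg hA, ite_self]
    exact if_neg fun h => hA h.1

theorem newmanS_pow_eq_root_of_unity_sum (b q : ℕ) (hb : 2 ≤ b) (hq : 1 ≤ q)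
    (i : ℤ) (k : ℕ) :
    (newmanS b q i (b ^ k) : ℂ) =
      (q : ℂ)⁻¹ * ∑ m ∈ Finset.range q,
        Complex.exp (2 * Real.pi * Complex.I / q) ^ (-(i * m)) *
          ∏ p ∈ Finset.range k,
            (1 - Complex.exp (2 * Real.pi * Complex.I / q) ^ (m * b ^ p)) := by
  have : NeZero q := .of_pos hq
  have hζ := Complex.isPrimitiveRoot_exp q (NeZero.ne q)
  rw [newmanS_eq_sum_ite_modEq_digitSign]
  push_cast
  simp_rw [hζ.sum_ite_modEq, pow_mul, prod_one_sub_pow_pow_eq_sum_digitSign hb]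
end

section
/- Let b ≥ 2 be an integer and let d ≥ 3 be a divisor of b+1. For k₁ > k₂ > ⋯ > k_r ≥ 0 and any integer i, S^{(d−1)}_{d,i}((d−1)^{k₁} + ⋯ + (d−1)^{k_r}) = S^{(b)}_{d,i}(b^{k₁} + ⋯ + b^{k_r}). -/
/-!
For `M ≤ c ^ k`, the elements of `A_c` in `[c ^ k, c ^ k + M)` are the numbers `c ^ k + m` with
`m ∈ A_c`, `m < M`, each carrying one extra digit `1`; this gives
`S_{q,i}(c ^ k + M) = S_{q,i}(c ^ k) - S_{q,i - c ^ k}(M)`. Since `A_c ∩ [2 c ^ k, c ^ (k + 1))`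
is empty, also `S_{q,i}(c ^ (k + 1)) = S_{q,i}(c ^ k) - S_{q,i - c ^ k}(c ^ k)`. Both recursions
only see `c` through `c ^ k mod q`, so two bases that agree mod `q` give the same values; and
`d - 1 ≡ -1 ≡ b (mod d)`.
-/

namespace Nat

theorem digits_add_base_pow_mul {c k m a : ℕ} (hc : 1 < c) (ha : 0 < a) (hm : m < c ^ k) :
    c.digits (m + c ^ k * a) =
      c.digits m ++ List.replicate (k - (c.digits m).length) 0 ++ c.digits a := by
  have hlen : (c.digits m).length ≤ k := (digits_length_le_iff hc m).2 hm
  rw [digits_append_zeroes_append_digits hc ha, Nat.add_sub_cancel' hlen]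

theorem digits_base_pow_add {c k m : ℕ} (hc : 1 < c) (hm : m < c ^ k) :
    c.digits (c ^ k + m) = c.digits m ++ List.replicate (k - (c.digits m).length) 0 ++ [1] := by
  rw [← digits_of_lt c 1 one_ne_zero hc, ← digits_add_base_pow_mul hc one_pos hm, mul_one,
    add_comm]

theorem sum_pow_lt_pow {ι : Type*} [Fintype ι] {c n : ℕ} {f : ι → ℕ} (hc : 2 ≤ c)
    (hf : Function.Injective f) (hlt : ∀ j, f j < n) : ∑ j, c ^ f j < c ^ n := by
  rw [← Finset.sum_image fun x _ y _ h => hf h]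
  exact geomSum_lt hc fun x hx => by
    obtain ⟨j, -, rfl⟩ := Finset.mem_image.1 hx
    exact hlt j

end Nat

theorem inAset_base_pow_add_iff {c k m : ℕ} (hc : 1 < c) (hm : m < c ^ k) :
    inAset c (c ^ k + m) ↔ inAset c m := by
  simp [inAset, Nat.digits_base_pow_add hc hm, or_imp, forall_and]

theorem not_inAset_of_two_mul_pow_le {c k n : ℕ} (hc : 1 < c) (h2 : 2 * c ^ k ≤ n)
    (hn : n < c ^ (k + 1)) : ¬ inAset c n := by
  have hpos : 0 < c ^ k := by positivity
  have ha2 : 2 ≤ n / c ^ k := (Nat.le_div_iff_mul_le hpos).2 (by linarith)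
  have hac : n / c ^ k < c := Nat.div_lt_of_lt_mul (by rwa [pow_succ] at hn)
  have hdig := Nat.digits_add_base_pow_mul hc (a := n / c ^ k) (by omega) (Nat.mod_lt n hpos)
  rw [Nat.mod_add_div, Nat.digits_of_lt c _ (by omega) hac] at hdig
  intro hA
  have := hA (n / c ^ k) (by simp [hdig])
  omega

theorem newmanS_congr {c q : ℕ} {i i' : ℤ} (h : i ≡ i' [ZMOD q]) (N : ℕ) :
    newmanS c q i N = newmanS c q i' N := by
  rw [newmanS, newmanS, show i % q = i' % q from h]

theorem newmanS_eq_of_forall_not_inAset {c q M N : ℕ} (i : ℤ) (hMN : M ≤ N)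
    (h : ∀ n, M ≤ n → n < N → ¬ inAset c n) : newmanS c q i N = newmanS c q i M := by
  obtain ⟨E, rfl⟩ := Nat.exists_eq_add_of_le hMN
  rw [newmanS, newmanS, Finset.sum_range_add, add_eq_left]
  exact Finset.sum_eq_zero fun e he =>
    if_neg fun hA => h _ le_self_add (by simpa using he) hA.1

theorem newmanS_base_pow_add {c : ℕ} (hc : 1 < c) (q : ℕ) (i : ℤ) {k M : ℕ} (hM : M ≤ c ^ k) :
    newmanS c q i (c ^ k + M) = newmanS c q i (c ^ k) - newmanS c q (i - c ^ k) M := by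
  rw [newmanS, newmanS, newmanS, Finset.sum_range_add, sub_eq_add_neg, ← Finset.sum_neg_distrib]
  congr 1
  refine Finset.sum_congr rfl fun m hm => ?_
  have hmk : m < c ^ k := (Finset.mem_range.1 hm).trans_le hM
  have hA := inAset_base_pow_add_iff hc hmk
  have hsum : (c.digits (c ^ k + m)).sum = (c.digits m).sum + 1 := by
    simp [Nat.digits_base_pow_add hc hmk]
  have hmod : ((c ^ k + m : ℕ) : ℤ) ≡ i [ZMOD q] ↔ (m : ℤ) ≡ i - c ^ k [ZMOD q] := by
    push_cast
    rw [Int.modEq_iff_dvd, Int.modEq_iff_dvd, sub_sub]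
  simp only [inAset, Int.ModEq] at hA hmod
  simp only [hA, hmod, hsum, pow_succ]
  split_ifs <;> simp

theorem newmanS_base_pow_succ {c : ℕ} (hc : 1 < c) (q : ℕ) (i : ℤ) (k : ℕ) :
    newmanS c q i (c ^ (k + 1)) = newmanS c q i (c ^ k) - newmanS c q (i - c ^ k) (c ^ k) := by
  have h2 : 2 * c ^ k ≤ c ^ (k + 1) := by
    rw [pow_succ']
    exact Nat.mul_le_mul_right _ hc
  rw [← newmanS_base_pow_add hc q i le_rfl, ← two_mul,
    newmanS_eq_of_forall_not_inAset i h2 fun n hn hn' => not_inAset_of_two_mul_pow_le hc hn hn']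

theorem sub_pow_modEq_sub_pow {c c' q : ℕ} (h : c ≡ c' [MOD q]) (i : ℤ) (k : ℕ) :
    i - (c : ℤ) ^ k ≡ i - (c' : ℤ) ^ k [ZMOD q] :=
  (Int.natCast_modEq_iff.2 h).pow k |>.sub_left i

theorem newmanS_base_pow_eq_of_modEq {c c' q : ℕ} (hc : 1 < c) (hc' : 1 < c')
    (h : c ≡ c' [MOD q]) (k : ℕ) (i : ℤ) :
    newmanS c q i (c ^ k) = newmanS c' q i (c' ^ k) := by
  induction k generalizing i with
  | zero => simp [newmanS]
  | succ k ih =>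
    rw [newmanS_base_pow_succ hc, newmanS_base_pow_succ hc', ih, ih,
      newmanS_congr (sub_pow_modEq_sub_pow h i k)]

theorem newmanS_sum_base_pow_eq_of_modEq {c c' q : ℕ} (hc : 1 < c) (hc' : 1 < c')
    (h : c ≡ c' [MOD q]) {r : ℕ} {k : Fin r → ℕ} (hk : StrictAnti k) (i : ℤ) :
    newmanS c q i (∑ j, c ^ k j) = newmanS c' q i (∑ j, c' ^ k j) := by
  induction r generalizing i with
  | zero => simp [newmanS]
  | succ r ih =>
    have htail : StrictAnti fun j : Fin r => k j.succ := hk.comp_strictMono Fin.strictMono_succ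
    have hlt : ∀ j : Fin r, k j.succ < k 0 := fun j => hk (Fin.succ_pos j)
    rw [Fin.sum_univ_succ, Fin.sum_univ_succ,
      newmanS_base_pow_add hc q i (Nat.sum_pow_lt_pow hc htail.injective hlt).le,
      newmanS_base_pow_add hc' q i (Nat.sum_pow_lt_pow hc' htail.injective hlt).le,
      newmanS_base_pow_eq_of_modEq hc hc' h, newmanS_congr (sub_pow_modEq_sub_pow h i _)]
    exact congrArg _ (ih htail _)

theorem newmanS_base_change (b d : ℕ) (hb : 2 ≤ b) (hd : 3 ≤ d)
    (hdvd : d ∣ (b + 1)) (r : ℕ) (k : Fin r → ℕ) (hk : StrictAnti k) (i : ℤ) :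
    newmanS (d - 1) d i (∑ j : Fin r, (d - 1) ^ k j) =
      newmanS b d i (∑ j : Fin r, b ^ k j) := by
  have hmod : d - 1 ≡ b [MOD d] := by
    refine Nat.ModEq.add_right_cancel' 1 ?_
    rw [Nat.sub_add_cancel (by omega)]
    exact (Nat.modEq_zero_iff_dvd.2 dvd_rfl).trans (Nat.modEq_zero_iff_dvd.2 hdvd).symm
  exact newmanS_sum_base_pow_eq_of_modEq (by omega) hb hmod hk i
end
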